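/- arXiv:2007.13383 — 7 statements merged into one kernel-verified Lean document; each statement's English description precedes it below -/
import Mathlib

section
/- If a group G contains a balanced subgroup H of finite index, then G itself is balanced. -/
def IsBalancedGroup (G : Type*) [Group G] : Prop :=
  ∀ g : G, ¬ IsOfFinOrder g → ∀ h : G, ∀ n m : ℤ, h * g ^ n * h⁻¹ = g ^ m → |n| = |m|

/-!
Given `h gⁿ h⁻¹ = gᵐ` in `G`, choose `d, e > 0` with `gᵈ, hᵉ ∈ H`. Iterating the relation gives
`hᵉ (gᵈ)^(nᵉ) h⁻ᵉ = (gᵈ)^(mᵉ)`, an equation in `H` about the infinite-order element `gᵈ`.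
Balancedness of `H` gives `|n|ᵉ = |m|ᵉ`, hence `|n| = |m|`.
-/

section ConjRelation

variable {G : Type*} [Group G] {g h : G} {n m : ℤ}

theorem conj_pow_zpow_pow_of_conj_zpow (hc : h * g ^ n * h⁻¹ = g ^ m) (j : ℕ) :
    h ^ j * g ^ (n ^ j) * (h ^ j)⁻¹ = g ^ (m ^ j) := by
  induction j with
  | zero => simp
  | succ j ih =>
    calc h ^ (j + 1) * g ^ (n ^ (j + 1)) * (h ^ (j + 1))⁻¹
        = h * (h ^ j * (g ^ n ^ j) ^ n * (h ^ j)⁻¹) * h⁻¹ := by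
          rw [← zpow_mul, ← pow_succ, pow_succ', pow_succ]; group
      _ = h * (g ^ n) ^ (m ^ j) * h⁻¹ := by
          rw [← conj_zpow, ih, ← zpow_mul, ← zpow_mul, mul_comm]
      _ = g ^ (m ^ (j + 1)) := by
          rw [← conj_zpow, hc, ← zpow_mul, pow_succ', mul_comm]

theorem conj_zpow_zpow_of_conj_zpow (hc : h * g ^ n * h⁻¹ = g ^ m) (d : ℤ) :
    h * (g ^ d) ^ n * h⁻¹ = (g ^ d) ^ m := by
  rw [← zpow_mul, mul_comm, zpow_mul, ← conj_zpow, hc, ← zpow_mul, mul_comm, zpow_mul]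

end ConjRelation

theorem balanced_of_finiteIndex_balanced_subgroup {G : Type*} [Group G]
    (H : Subgroup G) (hfi : H.FiniteIndex) (hH : IsBalancedGroup H) : IsBalancedGroup G := by
  intro g hg h n m hc
  obtain ⟨d, hd, -, hgd⟩ := H.exists_pow_mem_of_index_ne_zero hfi.index_ne_zero g
  obtain ⟨e, he, -, hhe⟩ := H.exists_pow_mem_of_index_ne_zero hfi.index_ne_zero h
  set a : H := ⟨g ^ d, hgd⟩
  set b : H := ⟨h ^ e, hhe⟩
  have ha : ¬IsOfFinOrder a := fun ha ↦
    hg ((Submonoid.isOfFinOrder_coe.mpr ha).of_pow hd.ne')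
  have hab : b * a ^ (n ^ e) * b⁻¹ = a ^ (m ^ e) := Subtype.ext <| by
    simpa using conj_zpow_zpow_of_conj_zpow (conj_pow_zpow_pow_of_conj_zpow hc e) d
  have habs := hH a ha b _ _ hab
  rwa [abs_pow, abs_pow, pow_left_inj₀ (abs_nonneg n) (abs_nonneg m) he.ne'] at habs
end

section
/- Every virtually cyclic group is balanced. -/
/-!
Pass to the normal core `N` of the cyclic subgroup: it is still cyclic and of finite index `k`.
Conjugation by `h` is an automorphism of the cyclic group `N`, hence a power map `x ↦ x ^ e`,
and since it is invertible and `N` contains the infinite-order element `g ^ k`, `e = ±1`.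
Raising `h g ^ n h⁻¹ = g ^ m` to the `k`-th power then gives `g ^ (± k n) = g ^ (k m)`.
-/

namespace Subgroup

variable {G : Type*} [Group G] (N : Subgroup G) [N.Normal] [IsCyclic N]

theorem exists_conj_eq_zpow_of_isCyclic (h : G) : ∃ e : ℤ, ∀ x ∈ N, h * x * h⁻¹ = x ^ e := by
  obtain ⟨e, he⟩ := (MulAut.conjNormal (H := N) h).toMonoidHom.map_cyclic
  refine ⟨e, fun x hx => ?_⟩
  simpa only [MulEquiv.coe_toMonoidHom, MulAut.conjNormal_apply, SubgroupClass.coe_zpow]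
    using congrArg Subtype.val (he ⟨x, hx⟩)

theorem conj_eq_self_or_inv_of_isCyclic {x : G} (hx : x ∈ N) (hx_inf : ¬ IsOfFinOrder x) (h : G) :
    h * x * h⁻¹ = x ∨ h * x * h⁻¹ = x⁻¹ := by
  obtain ⟨e, he⟩ := N.exists_conj_eq_zpow_of_isCyclic h
  obtain ⟨f, hf⟩ := N.exists_conj_eq_zpow_of_isCyclic h⁻¹
  have hxe : x ^ e ∈ N := N.zpow_mem hx e
  have hef : x ^ (e * f) = x ^ (1 : ℤ) := by
    calc x ^ (e * f) = h⁻¹ * x ^ e * h⁻¹⁻¹ := by rw [hf _ hxe, zpow_mul]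
      _ = x ^ (1 : ℤ) := by rw [← he x hx]; group
  rcases Int.eq_one_or_neg_one_of_mul_eq_one (injective_zpow_iff_not_isOfFinOrder.mpr hx_inf hef)
    with rfl | rfl
  · exact .inl (by simpa using he x hx)
  · exact .inr (by simpa using he x hx)

end Subgroup

theorem balanced_of_virtually_cyclic {G : Type*} [Group G]
    (hG : ∃ H : Subgroup G, IsCyclic H ∧ H.FiniteIndex) : IsBalancedGroup G := by
  obtain ⟨H, hH, hH_fin⟩ := hG
  have : IsCyclic H.normalCore := Subgroup.isCyclic_of_le H.normalCore_le
  intro g hg h n m hconj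
  set k := H.normalCore.index
  have hk : k ≠ 0 := Subgroup.FiniteIndex.index_ne_zero
  have hgk : ¬ IsOfFinOrder (g ^ k) := fun hfin => hg (hfin.of_pow hk)
  have hcomm (j : ℤ) : (g ^ k) ^ j = (g ^ j) ^ k := by
    rw [← zpow_natCast, ← zpow_mul, ← zpow_natCast, ← zpow_mul, mul_comm]
  have hconj_pow : h * (g ^ k) ^ n * h⁻¹ = (g ^ k) ^ m := by
    rw [hcomm, hcomm, ← conj_pow, hconj]
  have hinj := injective_zpow_iff_not_isOfFinOrder.mpr hgk
  rcases H.normalCore.conj_eq_self_or_inv_of_isCyclic (H.normalCore.pow_index_mem g) hgk h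
    with hself | hinv
  · rw [← conj_zpow, hself] at hconj_pow
    rw [hinj hconj_pow]
  · rw [← conj_zpow, hinv, inv_zpow'] at hconj_pow
    rw [← hinj hconj_pow, abs_neg]
end

section
/- Let G be a group and let Φ₁, Φ₂ : G → D∞ be group homomorphisms to the infinite dihedral group, each with finite kernel and image of finite index in D∞. Then ker(Φ₁) = ker(Φ₂). -/
namespace DihedralGroup

theorem eq_zero_of_isOfFinOrder_r {i : ZMod 0} (h : IsOfFinOrder (r i : DihedralGroup 0)) :
    i = 0 := by
  obtain ⟨k, hk, hpow⟩ := h.exists_pow_eq_one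
  rw [r_pow, one_def, r.injEq] at hpow
  exact (mul_eq_zero.mp hpow).resolve_right (Nat.cast_ne_zero.mpr hk.ne')

theorem exists_r_mem_of_finiteIndex (H : Subgroup (DihedralGroup 0)) [H.FiniteIndex] :
    ∃ k : ZMod 0, k ≠ 0 ∧ r k ∈ H := by
  obtain ⟨n, hn, -, hmem⟩ :=
    H.exists_pow_mem_of_index_ne_zero Subgroup.FiniteIndex.index_ne_zero (r 1)
  exact ⟨n, Nat.cast_ne_zero.mpr hn.ne', by rwa [← r_one_pow]⟩

/-- Conjugating a reflection `sr i ∈ N` by a translation `r k ∈ H` and multiplying by `sr i`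
gives the translation `r (2k)`, which has infinite order. -/
theorem eq_bot_of_finite_of_le_normalizer {N H : Subgroup (DihedralGroup 0)} [Finite N]
    [H.FiniteIndex] (hH : H ≤ Subgroup.normalizer (N : Set (DihedralGroup 0))) : N = ⊥ := by
  have hrot : ∀ i, r i ∈ N → i = 0 := fun i hi =>
    eq_zero_of_isOfFinOrder_r (N.subtype.isOfFinOrder (isOfFinOrder_of_finite ⟨r i, hi⟩))
  obtain ⟨k, hk, hkH⟩ := exists_r_mem_of_finiteIndex H
  rw [Subgroup.eq_bot_iff_forall]
  rintro (i | i) hi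
  · rw [hrot i hi, r_zero]
  · have hconj : r k * sr i * (r k)⁻¹ ∈ N := (Subgroup.mem_normalizer_iff.mp (hH hkH) _).mp hi
    have htrans : i - (i - k + -k) = 0 := hrot _ (N.mul_mem hconj hi)
    have h2k : (2 : ZMod 0) * k = 0 := by linear_combination htrans
    exact absurd ((mul_eq_zero.mp h2k).resolve_left two_ne_zero) hk

end DihedralGroup

theorem MonoidHom.ker_le_ker_of_finite_of_finiteIndex_toDihedral {G : Type*} [Group G]
    (φ ψ : G →* DihedralGroup 0) [Finite φ.ker] [ψ.range.FiniteIndex] : φ.ker ≤ ψ.ker := by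
  have : Finite (φ.ker.map ψ) := Finite.of_surjective _ (ψ.subgroupMap_surjective φ.ker)
  rw [← Subgroup.map_eq_bot_iff]
  refine DihedralGroup.eq_bot_of_finite_of_le_normalizer (H := ψ.range) ?_
  calc ψ.range = (⊤ : Subgroup G).map ψ := ψ.range_eq_map
    _ = (Subgroup.normalizer (φ.ker : Set G)).map ψ := by rw [Subgroup.normalizer_eq_top]
    _ ≤ _ := Subgroup.le_normalizer_map ψ

theorem ker_eq_of_finiteKernel_finiteIndex_toDihedral {G : Type*} [Group G]
    (Φ₁ Φ₂ : G →* DihedralGroup 0)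
    (h₁ : Finite Φ₁.ker) (h₂ : Finite Φ₂.ker)
    (h₁' : Φ₁.range.FiniteIndex) (h₂' : Φ₂.range.FiniteIndex) :
    Φ₁.ker = Φ₂.ker :=
  le_antisymm (Φ₁.ker_le_ker_of_finite_of_finiteIndex_toDihedral Φ₂)
    (Φ₂.ker_le_ker_of_finite_of_finiteIndex_toDihedral Φ₁)
end

section
/- There is no group G admitting both a surjective homomorphism Φ : G → ℤ with finite kernel and a surjective homomorphism Φ' : G → D∞ with finite kernel. -/
/-!
Elements of finite order are controlled by homomorphisms with finite kernel: if `f g` has finite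
order then some power `g ^ n` lies in the finite kernel, so `g` has finite order too. Through
`Φ : G → ℤ` every element of finite order of `G` lands in the torsion-free group `ℤ`, so it lies in
the finite kernel of `Φ`; hence `G` has only finitely many elements of finite order. Through the
surjection `Φ' : G → D∞` they cover all the infinitely many reflections of `D∞`.
-/

namespace MonoidHom

variable {G H : Type*} [Group G] [Group H]

theorem isOfFinOrder_of_isOfFinOrder_map (f : G →* H) [Finite f.ker] {g : G}
    (hg : IsOfFinOrder (f g)) : IsOfFinOrder g := by
  obtain ⟨n, hn, hpow⟩ := isOfFinOrder_iff_pow_eq_one.mp hg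
  have hmem : g ^ n ∈ f.ker := by rwa [mem_ker, map_pow]
  have : IsOfFinOrder (⟨g ^ n, hmem⟩ : f.ker) := isOfFinOrder_of_finite _
  exact (Submonoid.isOfFinOrder_coe.mpr this).of_pow hn.ne'

theorem finite_setOf_isOfFinOrder [IsMulTorsionFree H] (f : G →* H) [Finite f.ker] :
    {g : G | IsOfFinOrder g}.Finite :=
  (f.ker : Set G).toFinite.subset fun _ hg => (f.isOfFinOrder hg).eq_one'

theorem infinite_setOf_isOfFinOrder_of_surjective (f : G →* H) [Finite f.ker]
    (hf : Function.Surjective f) (hH : {x : H | IsOfFinOrder x}.Infinite) :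
    {g : G | IsOfFinOrder g}.Infinite := by
  refine Set.Infinite.of_image f (hH.mono fun x hx => ?_)
  obtain ⟨g, rfl⟩ := hf x
  exact ⟨g, f.isOfFinOrder_of_isOfFinOrder_map hx, rfl⟩

end MonoidHom

theorem DihedralGroup.infinite_setOf_isOfFinOrder :
    {x : DihedralGroup 0 | IsOfFinOrder x}.Infinite :=
  Set.infinite_of_injective_forall_mem (fun _ _ h => sr.inj h) fun i =>
    orderOf_pos_iff.mp (by rw [orderOf_sr]; norm_num)

theorem no_group_surjects_onto_int_and_infinite_dihedral_general
    (G : Type*) [Group G] (Φ : G →* Multiplicative ℤ) (Φ' : G →* DihedralGroup 0)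
    (hΦ' : Function.Surjective Φ')
    (hker : Finite Φ.ker) (hker' : Finite Φ'.ker) : False :=
  Φ'.infinite_setOf_isOfFinOrder_of_surjective hΦ' DihedralGroup.infinite_setOf_isOfFinOrder
    Φ.finite_setOf_isOfFinOrder

theorem no_group_surjects_onto_int_and_infinite_dihedral
    (G : Type*) [Group G] (Φ : G →* Multiplicative ℤ) (Φ' : G →* DihedralGroup 0)
    (hΦ : Function.Surjective Φ) (hΦ' : Function.Surjective Φ')
    (hker : Finite Φ.ker) (hker' : Finite Φ'.ker) : False :=
  no_group_surjects_onto_int_and_infinite_dihedral_general G Φ Φ' hΦ' hker hker'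
end

section
/- In the Baumslag–Solitar group BS(m,n) = ⟨a, t ∣ t a^m t⁻¹ = a^n⟩ with m, n nonzero integers, the generator a has infinite order. -/
def BSRels (m n : ℤ) : Set (FreeGroup (Fin 2)) :=
  { FreeGroup.of 1 * FreeGroup.of 0 ^ m * (FreeGroup.of 1)⁻¹ * (FreeGroup.of 0 ^ n)⁻¹ }

abbrev BS (m n : ℤ) := PresentedGroup (BSRels m n)

def BS.a (m n : ℤ) : BS m n := PresentedGroup.of 0

def BS.t (m n : ℤ) : BS m n := PresentedGroup.of 1

/-!
`BS(m,n)` acts on `ℚ` by affine maps, with `a` acting as `x ↦ x + 1` and `t` as `x ↦ (n / m) x`. Conjugating the translation by `m` with this scaling gives the translation by `n`,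
so the defining relation holds, and `a` maps to a translation of infinite order.
-/

namespace Equiv

theorem isOfFinOrder_addRight_iff {α : Type*} [AddGroup α] (x : α) :
    IsOfFinOrder (Equiv.addRight x) ↔ IsOfFinAddOrder x := by
  simp only [isOfFinOrder_iff_pow_eq_one, isOfFinAddOrder_iff_nsmul_eq_zero, nsmul_addRight]
  refine exists_congr fun k => and_congr_right fun _ => ⟨fun h => ?_, fun h => by simp [h]⟩
  simpa using congrArg (· 0) h

theorem mulLeft₀_mul_addRight_mul_inv {K : Type*} [DivisionRing K] (c x : K) (hc : c ≠ 0) :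
    Equiv.mulLeft₀ c hc * Equiv.addRight x * (Equiv.mulLeft₀ c hc)⁻¹ = Equiv.addRight (c * x) := by
  ext y
  simp [Perm.inv_def, mul_add, mul_inv_cancel_left₀ hc]

end Equiv

namespace BS

variable {m n : ℤ} {G : Type*} [Group G]

def lift (a t : G) (h : t * a ^ m * t⁻¹ = a ^ n) : BS m n →* G :=
  PresentedGroup.toGroup (f := ![a, t]) <| by
    rintro r rfl
    simp [h]

@[simp]
theorem lift_a (a t : G) (h : t * a ^ m * t⁻¹ = a ^ n) : lift a t h (BS.a m n) = a :=
  PresentedGroup.toGroup.of _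

end BS

theorem BS_a_infinite_order (m n : ℤ) (hm : m ≠ 0) (hn : n ≠ 0) :
    ¬ IsOfFinOrder (BS.a m n) := by
  have hc : (n / m : ℚ) ≠ 0 := div_ne_zero (Int.cast_ne_zero.2 hn) (Int.cast_ne_zero.2 hm)
  have hrel : Equiv.mulLeft₀ _ hc * Equiv.addRight (1 : ℚ) ^ m * (Equiv.mulLeft₀ _ hc)⁻¹ =
      Equiv.addRight 1 ^ n := by
    rw [Equiv.zsmul_addRight, Equiv.zsmul_addRight, Equiv.mulLeft₀_mul_addRight_mul_inv]
    congr 1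
    field_simp
    ring
  intro ha
  have hfin := (BS.lift _ _ hrel).isOfFinOrder ha
  rw [BS.lift_a, Equiv.isOfFinOrder_addRight_iff] at hfin
  exact not_isOfFinAddOrder_of_isAddTorsionFree one_ne_zero hfin
end

section
/- Let C be a virtually cyclic group and let G = A ∗_C B be an amalgamated free product of groups A and B over C (via injective homomorphisms C → A and C → B). If A and B are balanced, then G is balanced. -/
universe u

/-- The family with value `A` at `true` and `B` at `false`. -/
def fam (A B : Type u) : Bool → Type u
  | true => A
  | false => B

instance famGroup (A B : Type u) [Group A] [Group B] : (b : Bool) → Group (fam A B b)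
  | true => inferInstanceAs (Group A)
  | false => inferInstanceAs (Group B)

/-- The pair of homomorphisms from the amalgamated subgroup. -/
def famHom {A B C : Type u} [Group A] [Group B] [Group C] (f : C →* A) (g : C →* B) :
    (b : Bool) → C →* fam A B b
  | true => f
  | false => g

/-- The amalgamated free product `A ∗_C B`. -/
abbrev AmalgamatedProduct {A B C : Type u} [Group A] [Group B] [Group C]
    (f : C →* A) (g : C →* B) : Type _ :=
  Monoid.PushoutI (famHom f g)

/-!
Work in the normal form of an amalgam of any family of groups over a common subgroup `C`.
An element of infinite order is conjugate either into a factor or to a cyclically reduced word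
`w` of positive length `L`. In the second case the normal-form length of `w ^ k` is `|k| * L`,
and subadditivity of the length forbids a conjugation `w ^ n ↦ w ^ m` unless `|n| = |m|`.

In the first case, with `u` in a factor, a conjugation `u ^ n ↦ u ^ m` in the amalgam either
happens inside the factor, or both `u ^ n` and `u ^ m` are conjugate in the factor to elements
`c`, `c'` of `C` which are conjugate in the amalgam. As `C` is virtually cyclic there are `z ∈ C`
and `N > 0` with `c ^ N = z ^ t c` for all `c ∈ C`. Balancedness of the factors makes `|t c|`
invariant under conjugation inside a factor, hence, peeling the conjugator off letter by letter,
under conjugation in the amalgam; comparing exponents of `z` then gives `|n| = |m|`.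
-/

section Balanced

variable {Γ : Type*} [Group Γ]

theorem IsConj.zpow {a b : Γ} (n : ℤ) (h : IsConj a b) : IsConj (a ^ n) (b ^ n) := by
  obtain ⟨c, rfl⟩ := isConj_iff.1 h
  exact isConj_iff.2 ⟨c, conj_zpow.symm⟩

theorem IsOfFinOrder.of_zpow {u : Γ} {n : ℤ} (h : IsOfFinOrder (u ^ n)) (hn : n ≠ 0) :
    IsOfFinOrder u := by
  obtain ⟨k, hk, hk1⟩ := isOfFinOrder_iff_zpow_eq_one.1 h
  exact isOfFinOrder_iff_zpow_eq_one.2 ⟨n * k, mul_ne_zero hn hk, by rw [zpow_mul, hk1]⟩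

def IsBalancedAt (g : Γ) : Prop :=
  ∀ n m : ℤ, IsConj (g ^ n) (g ^ m) → |n| = |m|

theorem isBalancedGroup_iff :
    IsBalancedGroup Γ ↔ ∀ g : Γ, ¬IsOfFinOrder g → IsBalancedAt g :=
  forall₂_congr fun _ _ => by
    simp only [IsBalancedAt, isConj_iff]
    exact ⟨fun h n m ⟨x, hx⟩ => h x n m hx, fun h x n m hx => h n m ⟨x, hx⟩⟩

theorem IsBalancedAt.of_isConj {g g' : Γ} (hg : IsBalancedAt g) (h : IsConj g g') :
    IsBalancedAt g' := fun n m hc =>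
  hg n m ((h.zpow n).trans (hc.trans (h.zpow m).symm))

theorem isBalancedAt_of_ne_zero {g : Γ} (hg : ¬IsOfFinOrder g)
    (h : ∀ n m : ℤ, n ≠ 0 → m ≠ 0 → IsConj (g ^ n) (g ^ m) → |n| = |m|) :
    IsBalancedAt g := by
  have hinj := injective_zpow_iff_not_isOfFinOrder.2 hg
  have zero_iff : ∀ n m : ℤ, IsConj (g ^ n) (g ^ m) → (n = 0 ↔ m = 0) := fun n m hc => by
    constructor <;> rintro rfl
    · exact hinj (by simpa [eq_comm] using hc)
    · exact hinj (by simpa using hc)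
  intro n m hc
  by_cases hn : n = 0
  · simp [hn, (zero_iff n m hc).1 hn]
  · exact h n m hn (mt (zero_iff n m hc).2 hn) hc

theorem IsBalancedAt.abs_mul_eq {w u : Γ} (hw : IsBalancedAt w) {p q s r : ℤ}
    (h₁ : IsConj (u ^ p) (w ^ s)) (h₂ : IsConj (u ^ q) (w ^ r)) : |s * q| = |r * p| := by
  apply hw
  have h₁q := h₁.zpow q
  have h₂p := h₂.zpow p
  rw [← zpow_mul, ← zpow_mul] at h₁q h₂p
  rw [mul_comm q p] at h₂p
  exact h₁q.symm.trans h₂p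

theorem isBalancedAt_of_length_zpow (len : Γ → ℕ)
    (hmul : ∀ x y, len (x * y) ≤ len x + len y) {g : Γ} {L : ℕ} (hL : 0 < L)
    (hpow : ∀ k : ℤ, len (g ^ k) = k.natAbs * L) : IsBalancedAt g := by
  suffices key : ∀ n m : ℤ, IsConj (g ^ n) (g ^ m) → m.natAbs ≤ n.natAbs by
    intro n m h
    rw [Int.abs_eq_natAbs, Int.abs_eq_natAbs, le_antisymm (key m n h.symm) (key n m h)]
  intro n m h
  obtain ⟨x, hx⟩ := isConj_iff.1 h
  set k := len x + len x⁻¹ + 1 with hk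
  have hconj : x * g ^ (n * k) * x⁻¹ = g ^ (m * k) := by
    rw [zpow_mul, zpow_mul, ← conj_zpow, hx]
  have hle : m.natAbs * k * L ≤ len x + len x⁻¹ + n.natAbs * k * L := by
    calc m.natAbs * k * L = len (g ^ (m * k)) := by rw [hpow, Int.natAbs_mul]; rfl
      _ = len (x * g ^ (n * k) * x⁻¹) := by rw [hconj]
      _ ≤ len x + len (g ^ (n * k)) + len x⁻¹ := (hmul _ _).trans (by gcongr; exact hmul _ _)
      _ = len x + len x⁻¹ + n.natAbs * k * L := by rw [hpow, Int.natAbs_mul, Int.natAbs_natCast]; ring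
  by_contra! hlt
  have : (n.natAbs + 1) * k * L ≤ m.natAbs * k * L := by gcongr; omega
  have : k ≤ k * L := Nat.le_mul_of_pos_right k hL
  nlinarith

theorem Subgroup.exists_pow_eq_zpow_of_isCyclic {Z : Subgroup Γ} (hZ : IsCyclic Z)
    [Z.FiniteIndex] : ∃ (z : Γ), ∃ N ≠ 0, ∀ c : Γ, ∃ t : ℤ, c ^ N = z ^ t := by
  have : IsCyclic Z.normalCore := Subgroup.isCyclic_of_le Z.normalCore_le
  obtain ⟨z, hz⟩ := (Subgroup.isCyclic_iff_exists_zpowers_eq_top _).1 this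
  refine ⟨z, Z.normalCore.index, Subgroup.FiniteIndex.index_ne_zero, fun c => ?_⟩
  obtain ⟨t, ht⟩ := Subgroup.mem_zpowers_iff.1 (hz.ge (Z.normalCore.pow_index_mem c))
  exact ⟨t, ht.symm⟩

end Balanced

namespace Monoid.PushoutI

variable {ι : Type*} {G : ι → Type*} {H : Type*} [∀ i, Group (G i)] [Group H]
  {φ : ∀ i, H →* G i}

open CoprodI NormalWord

section Lists

variable (φ) in
def listProd (l : List (Σ i, G i)) : PushoutI φ :=
  (l.map fun p => of p.1 p.2).prod

@[simp] theorem listProd_nil : listProd φ ([] : List (Σ i, G i)) = 1 := rfl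

@[simp] theorem listProd_cons (p : Σ i, G i) (l : List (Σ i, G i)) :
    listProd φ (p :: l) = of p.1 p.2 * listProd φ l := by
  simp [listProd]

@[simp] theorem listProd_append (l₁ l₂ : List (Σ i, G i)) :
    listProd φ (l₁ ++ l₂) = listProd φ l₁ * listProd φ l₂ := by
  simp [listProd]

theorem base_mul_listProd_cons (c : H) (p : Σ i, G i) (l : List (Σ i, G i)) :
    base φ c * listProd φ (p :: l) = listProd φ (⟨p.1, φ p.1 c * p.2⟩ :: l) := by
  rw [listProd_cons, listProd_cons, map_mul, of_apply_eq_base, mul_assoc]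

def invList (l : List (Σ i, G i)) : List (Σ i, G i) :=
  (l.map fun p => ⟨p.1, p.2⁻¹⟩).reverse

@[simp] theorem length_invList (l : List (Σ i, G i)) : (invList l).length = l.length := by
  simp [invList]

@[simp] theorem listProd_invList (l : List (Σ i, G i)) :
    listProd φ (invList l) = (listProd φ l)⁻¹ := by
  induction l with
  | nil => rfl
  | cons p l ih => simp_all [invList]

theorem listProd_flatten_replicate (l : List (Σ i, G i)) (k : ℕ) :
    listProd φ (List.replicate k l).flatten = listProd φ l ^ k := by
  induction k with
  | zero => simp
  | succ k ih => rw [List.replicate_succ, List.flatten_cons, listProd_append, ih, pow_succ']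

variable (φ) in
def IsReducedList (l : List (Σ i, G i)) : Prop :=
  l.IsChain (fun p q => p.1 ≠ q.1) ∧ ∀ p ∈ l, p.2 ∉ (φ p.1).range

theorem isReducedList_nil : IsReducedList φ ([] : List (Σ i, G i)) :=
  ⟨List.isChain_nil, by simp⟩

theorem isReducedList_cons {p : Σ i, G i} {l : List (Σ i, G i)} :
    IsReducedList φ (p :: l) ↔
      (∀ q ∈ l.head?, p.1 ≠ q.1) ∧ p.2 ∉ (φ p.1).range ∧ IsReducedList φ l := by
  simp only [IsReducedList, List.isChain_cons, List.mem_cons, forall_eq_or_imp]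
  tauto

theorem isReducedList_append {l₁ l₂ : List (Σ i, G i)} :
    IsReducedList φ (l₁ ++ l₂) ↔ IsReducedList φ l₁ ∧ IsReducedList φ l₂ ∧
      ∀ p ∈ l₁.getLast?, ∀ q ∈ l₂.head?, p.1 ≠ q.1 := by
  simp only [IsReducedList, List.isChain_append, List.mem_append]
  grind

theorem IsReducedList.invList {l : List (Σ i, G i)} (hl : IsReducedList φ l) :
    IsReducedList φ (invList l) := by
  refine ⟨?_, ?_⟩
  · rw [PushoutI.invList, List.isChain_reverse, List.isChain_map]
    exact hl.1.imp fun _ _ h => Ne.symm h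
  · simp only [PushoutI.invList, List.mem_reverse, List.mem_map]
    rintro _ ⟨p, hp, rfl⟩
    simpa using hl.2 p hp

variable (φ) in
def IsCyclicallyReduced (l : List (Σ i, G i)) : Prop :=
  IsReducedList φ l ∧ ∀ p ∈ l.getLast?, ∀ q ∈ l.head?, p.1 ≠ q.1

theorem IsCyclicallyReduced.flatten_replicate {l : List (Σ i, G i)}
    (hl : IsCyclicallyReduced φ l) (k : ℕ) : IsReducedList φ (List.replicate k l).flatten := by
  induction k with
  | zero => exact isReducedList_nil
  | succ k ih =>
    rw [List.replicate_succ, List.flatten_cons, isReducedList_append]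
    refine ⟨hl.1, ih, fun p hp q hq => hl.2 p hp q ?_⟩
    cases k with
    | zero => simp at hq
    | succ k => cases l <;> simp_all

end Lists

section WordLength

variable [DecidableEq ι] [∀ i, DecidableEq (G i)] (d : Transversal φ)

noncomputable def wordLength (x : PushoutI φ) : ℕ :=
  (NormalWord.equiv (d := d) x).toList.length

theorem wordLength_listProd {l : List (Σ i, G i)} (hl : IsReducedList φ l) :
    wordLength d (listProd φ l) = l.length := by
  let w : Word G := ⟨l, fun p hp h1 => (hl.2 p hp) (h1 ▸ one_mem _), hl.1⟩
  obtain ⟨w', hprod, hidx⟩ := Reduced.exists_normalWord_prod_eq d (w := w) hl.2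
  have hw' : NormalWord.equiv (d := d) (listProd φ l) = w' := by
    rw [← (NormalWord.equiv (d := d)).apply_symm_apply w']
    congr 1
    rw [show (NormalWord.equiv (d := d)).symm w' = w'.prod from rfl, hprod, Word.prod,
      map_list_prod, List.map_map]
    rfl
  rw [wordLength, hw', ← List.length_map Sigma.fst, hidx, List.length_map]

theorem wordLength_base_mul (c : H) (x : PushoutI φ) :
    wordLength d (base φ c * x) = wordLength d x := by
  simp only [wordLength, NormalWord.equiv, Equiv.coe_fn_mk, mul_smul, base_smul_def]

theorem wordLength_one : wordLength d (1 : PushoutI φ) = 0 :=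
  wordLength_listProd d (isReducedList_nil (φ := φ))

theorem wordLength_base (c : H) : wordLength d (base φ c) = 0 := by
  simpa [wordLength_one] using wordLength_base_mul d c 1

theorem exists_eq_base_mul_listProd (x : PushoutI φ) : ∃ (c : H) (l : List (Σ i, G i)),
    IsReducedList φ l ∧ x = base φ c * listProd φ l ∧ wordLength d x = l.length := by
  set w := NormalWord.equiv (d := d) x
  refine ⟨w.head, w.toList, ⟨w.chain_ne, fun p hp hr => w.ne_one p hp ?_⟩, ?_, rfl⟩
  · have h := (d.compl p.1).equiv_snd_eq_one_of_mem_of_one_mem (d.one_mem p.1) hr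
    rw [(d.compl p.1).equiv_snd_eq_self_of_mem_of_one_mem (one_mem _)
      (w.normalized p.1 p.2 hp)] at h
    exact congrArg Subtype.val h
  · conv_lhs => rw [← (NormalWord.equiv (d := d)).symm_apply_apply x]
    rw [show (NormalWord.equiv (d := d)).symm w = w.prod from rfl, NormalWord.prod, Word.prod,
      map_list_prod, List.map_map]
    rfl

theorem wordLength_of_mul_listProd_le {i : ι} (g : G i) {l : List (Σ i, G i)}
    (hl : IsReducedList φ l) (hhead : ∀ q ∈ l.head?, i ≠ q.1) :
    wordLength d (of i g * listProd φ l) ≤ l.length + 1 := by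
  by_cases hg : g ∈ (φ i).range
  · obtain ⟨c, rfl⟩ := hg
    rw [of_apply_eq_base, wordLength_base_mul, wordLength_listProd d hl]
    exact Nat.le_succ _
  · have hcons : IsReducedList φ (⟨i, g⟩ :: l) := isReducedList_cons.2 ⟨hhead, hg, hl⟩
    rw [← listProd_cons ⟨i, g⟩, wordLength_listProd d hcons, List.length_cons]

theorem wordLength_of_mul_le {i : ι} (g : G i) (x : PushoutI φ) :
    wordLength d (of i g * x) ≤ wordLength d x + 1 := by
  obtain ⟨c, l, hl, rfl, hlen⟩ := exists_eq_base_mul_listProd d x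
  have hswap : of i g * base φ c = base φ c * of i ((φ i c)⁻¹ * g * φ i c) := by
    simp only [map_mul, map_inv, of_apply_eq_base]
    group
  rw [← mul_assoc, hswap, mul_assoc, wordLength_base_mul, hlen]
  set g' := (φ i c)⁻¹ * g * φ i c
  match l, hl with
  | ⟨k, a⟩ :: l', hl =>
    obtain ⟨hhead, -, hl'⟩ := isReducedList_cons.1 hl
    by_cases hki : k = i
    · subst hki
      rw [listProd_cons, ← mul_assoc, ← map_mul]
      exact (wordLength_of_mul_listProd_le d _ hl' hhead).trans (by simp)
    · exact wordLength_of_mul_listProd_le d g' hl (by simpa [eq_comm] using hki)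
  | [], _ => exact wordLength_of_mul_listProd_le d g' isReducedList_nil (by simp)

theorem wordLength_of_le_one {i : ι} (g : G i) : wordLength d (of (φ := φ) i g) ≤ 1 := by
  simpa [wordLength_one] using wordLength_of_mul_le d g 1

theorem wordLength_mul_le (x y : PushoutI φ) :
    wordLength d (x * y) ≤ wordLength d x + wordLength d y := by
  obtain ⟨c, l, -, rfl, hlen⟩ := exists_eq_base_mul_listProd d x
  rw [mul_assoc, wordLength_base_mul, hlen]
  clear hlen
  induction l with
  | nil => simp
  | cons p l ih =>
    rw [listProd_cons, mul_assoc, List.length_cons]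
    linarith [wordLength_of_mul_le d p.2 (listProd φ l * y)]

theorem wordLength_inv_le (x : PushoutI φ) : wordLength d x⁻¹ ≤ wordLength d x := by
  obtain ⟨c, l, hl, rfl, hlen⟩ := exists_eq_base_mul_listProd d x
  rw [hlen, mul_inv_rev, ← listProd_invList, ← map_inv]
  calc _ ≤ wordLength d (listProd φ (invList l)) + wordLength d (base φ c⁻¹) :=
        wordLength_mul_le d _ _
    _ = l.length := by
      rw [wordLength_listProd d hl.invList, wordLength_base, length_invList, add_zero]

@[simp] theorem wordLength_inv (x : PushoutI φ) : wordLength d x⁻¹ = wordLength d x :=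
  le_antisymm (wordLength_inv_le d x) (by simpa using wordLength_inv_le d x⁻¹)

theorem wordLength_conj_of {l : List (Σ i, G i)} (hl : IsReducedList φ l) {i : ι} {u : G i}
    (hlast : ∀ p ∈ l.getLast?, p.1 ≠ i) (hu : u ∉ (φ i).range) :
    wordLength d (listProd φ l * of i u * (listProd φ l)⁻¹) = 2 * l.length + 1 := by
  have hred : IsReducedList φ (l ++ ⟨i, u⟩ :: invList l) := by
    refine isReducedList_append.2 ⟨hl, isReducedList_cons.2 ⟨?_, hu, hl.invList⟩, ?_⟩
    · simp only [invList, List.head?_reverse, List.getLast?_map, Option.mem_def,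
        Option.map_eq_some_iff]
      rintro _ ⟨p, hp, rfl⟩
      exact (hlast p hp).symm
    · simpa using hlast
  have := wordLength_listProd d hred
  simp only [listProd_append, listProd_cons, listProd_invList, List.length_append,
    List.length_cons, length_invList] at this
  rw [mul_assoc, this]
  ring

end WordLength

section

variable (hφ : ∀ i, Function.Injective (φ i))
include hφ

theorem isBalancedAt_listProd {l : List (Σ i, G i)} (hl : IsCyclicallyReduced φ l)
    (hne : l ≠ []) : IsBalancedAt (listProd φ l) := by
  classical
  obtain ⟨d⟩ := transversal_nonempty φ hφ
  refine isBalancedAt_of_length_zpow (wordLength d) (wordLength_mul_le d)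
    (List.length_pos_of_ne_nil hne) fun k => ?_
  have hnat (n : ℕ) : wordLength d (listProd φ l ^ n) = n * l.length := by
    rw [← listProd_flatten_replicate, wordLength_listProd d (hl.flatten_replicate n)]
    simp
  obtain ⟨n, rfl | rfl⟩ := Int.eq_nat_or_neg k <;> simp [hnat]

/- Induction on the conjugator, peeling off its last letter: a letter from the factor of `u` is
absorbed into `u`, and a letter from another factor leaves a reduced word of length at least 3
unless `u` lies in the base. -/
theorem isConj_or_isConj_base_of_isConj_of {i : ι} {u v : G i}
    (h : IsConj (of (φ := φ) i u) (of i v)) : IsConj u v ∨ ∃ c, IsConj u (φ i c) := by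
  classical
  obtain ⟨d⟩ := transversal_nonempty φ hφ
  obtain ⟨x, hx⟩ := isConj_iff.1 h
  clear h
  obtain ⟨c₀, l, hl, rfl, -⟩ := exists_eq_base_mul_listProd d x
  induction l using List.reverseRecOn generalizing u with
  | nil =>
    refine Or.inl (isConj_iff.2 ⟨φ i c₀, of_injective hφ i ?_⟩)
    rw [← hx]
    simp [of_apply_eq_base]
  | append_singleton l p ih =>
    obtain ⟨hl', -, -⟩ := isReducedList_append.1 hl
    by_cases hpi : p.1 = i
    · obtain ⟨k, a⟩ := p
      dsimp only at hpi
      subst hpi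
      have hconj : IsConj u (a * u * a⁻¹) := isConj_iff.2 ⟨a, rfl⟩
      refine (ih hl' ?_).imp hconj.trans fun ⟨c, hc⟩ => ⟨c, hconj.trans hc⟩
      rw [← hx]
      simp [mul_assoc]
    by_cases hu : u ∈ (φ i).range
    · obtain ⟨c, rfl⟩ := hu
      exact Or.inr ⟨c, IsConj.refl _⟩
    exfalso
    have hlen := wordLength_conj_of d hl (by simpa using hpi) hu
    have hx' : listProd φ (l ++ [p]) * of i u * (listProd φ (l ++ [p]))⁻¹ =
        of i (φ i c₀⁻¹ * v * φ i c₀) := by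
      rw [map_mul, map_mul, ← hx]
      simp [of_apply_eq_base, mul_assoc]
    have := wordLength_of_le_one d (φ i c₀⁻¹ * v * φ i c₀)
    rw [← hx', hlen] at this
    simp at this

variable [Nonempty ι]

theorem exists_isConj_of_or_isCyclicallyReduced (x : PushoutI φ) :
    (∃ i u, IsConj x (of (φ := φ) i u)) ∨
      ∃ l, IsCyclicallyReduced φ l ∧ l ≠ [] ∧ IsConj x (listProd φ l) := by
  classical
  obtain ⟨d⟩ := transversal_nonempty φ hφ
  induction hn : wordLength d x using Nat.strong_induction_on generalizing x with
  | _ n ih =>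
  obtain ⟨c, l, hl, rfl, hlen⟩ := exists_eq_base_mul_listProd d x
  match l, hl with
  | [], _ =>
    refine Or.inl ⟨Classical.arbitrary ι, φ _ c, ?_⟩
    rw [of_apply_eq_base, listProd_nil, mul_one]
  | [⟨i, a⟩], _ =>
    refine Or.inl ⟨i, φ i c * a, ?_⟩
    rw [base_mul_listProd_cons, listProd_cons, listProd_nil, mul_one]
  | ⟨i, a⟩ :: q :: l', hl =>
    obtain ⟨mid, ⟨k, b⟩, hsplit⟩ : ∃ mid r, q :: l' = mid ++ [r] :=
      ⟨_, _, (List.dropLast_append_getLast (List.cons_ne_nil q l')).symm⟩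
    rw [hsplit] at hl hlen hn ⊢
    obtain ⟨hhead, hi, hrest⟩ := isReducedList_cons.1 hl
    obtain ⟨hmid, -, -⟩ := isReducedList_append.1 hrest
    by_cases hik : i = k
    · subst hik
      have hconj : of i b * (base φ c * listProd φ (⟨i, a⟩ :: (mid ++ [⟨i, b⟩]))) *
          (of i b)⁻¹ = of i (b * φ i c * a) * listProd φ mid := by
        simp [of_apply_eq_base, mul_assoc]
      have hshorter : wordLength d (of i (b * φ i c * a) * listProd φ mid) < n := by
        have := wordLength_of_mul_le d (b * φ i c * a) (listProd φ mid)
        rw [wordLength_listProd d hmid] at this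
        have : n = mid.length + 2 := by rw [← hn, hlen]; simp
        omega
      have hx : IsConj (base φ c * listProd φ (⟨i, a⟩ :: (mid ++ [⟨i, b⟩])))
          (of i (b * φ i c * a) * listProd φ mid) := isConj_iff.2 ⟨_, hconj⟩
      exact (ih _ hshorter _ rfl).imp (fun ⟨j, u, h⟩ => ⟨j, u, hx.trans h⟩)
        fun ⟨l, hl, hne, h⟩ => ⟨l, hl, hne, hx.trans h⟩
    · refine Or.inr ⟨⟨i, φ i c * a⟩ :: (mid ++ [⟨k, b⟩]), ⟨?_, ?_⟩,
        List.cons_ne_nil _ _, ?_⟩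
      · refine isReducedList_cons.2 ⟨hhead, fun ⟨c', hc'⟩ => ?_, hrest⟩
        exact hi ⟨c⁻¹ * c', by simp [hc']⟩
      · simpa [List.getLast?_cons, eq_comm] using hik
      · rw [base_mul_listProd_cons]

theorem eq_of_isConj_base {α : Type*} (ν : H → α)
    (hν : ∀ k c c', IsConj (φ k c) (φ k c') → ν c = ν c') {c c' : H}
    (h : IsConj (base φ c) (base φ c')) : ν c = ν c' := by
  classical
  obtain ⟨d⟩ := transversal_nonempty φ hφ
  obtain ⟨x, hx⟩ := isConj_iff.1 h
  clear h
  obtain ⟨c₀, l, hl, rfl, -⟩ := exists_eq_base_mul_listProd d x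
  induction l using List.reverseRecOn generalizing c with
  | nil =>
    have hc : c₀ * c * c₀⁻¹ = c' := base_injective hφ (by simpa using hx)
    exact hν (Classical.arbitrary ι) c c' ((φ _).map_isConj (isConj_iff.2 ⟨c₀, hc⟩))
  | append_singleton l p ih =>
    obtain ⟨k, a⟩ := p
    obtain ⟨hl', -, hlast⟩ := isReducedList_append.1 hl
    by_cases hw : a * φ k c * a⁻¹ ∈ (φ k).range
    · obtain ⟨c₁, hc₁⟩ := hw
      rw [hν k c c₁ (isConj_iff.2 ⟨a, hc₁.symm⟩)]
      refine ih hl' ?_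
      rw [← hx, ← of_apply_eq_base φ k c₁, hc₁]
      simp [of_apply_eq_base, mul_assoc]
    exfalso
    have hlen := wordLength_conj_of d hl' (fun p hp => hlast p hp _ rfl) hw
    have hx' : listProd φ l * of k (a * φ k c * a⁻¹) * (listProd φ l)⁻¹ =
        base φ (c₀⁻¹ * c' * c₀) := by
      rw [map_mul (base φ), map_mul (base φ), ← hx]
      simp [of_apply_eq_base, mul_assoc]
    rw [hx', wordLength_base] at hlen
    omega

theorem abs_eq_of_isConj_base {z : H} (hz : ∀ k, IsBalancedAt (φ k z)) {N : ℕ} {t : H → ℤ}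
    (ht : ∀ c, c ^ N = z ^ t c) {c c' : H} (h : IsConj (base φ c) (base φ c')) :
    |t c| = |t c'| := by
  refine eq_of_isConj_base hφ (fun c => |t c|) (fun k c c' hc => ?_) h
  have hpow (c : H) : (φ k c) ^ (N : ℤ) = (φ k z) ^ t c := by
    rw [zpow_natCast, ← map_pow, ht, map_zpow]
  have hconj := hc.zpow N
  rw [hpow, hpow] at hconj
  exact hz k _ _ hconj

theorem isBalancedAt_of (hbal : ∀ i, IsBalancedGroup (G i))
    (hvc : ∃ Z : Subgroup H, IsCyclic Z ∧ Z.FiniteIndex) {i : ι} {u : G i}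
    (hu : ¬IsOfFinOrder u) : IsBalancedAt (of (φ := φ) i u) := by
  have hbalAt (k : ι) := isBalancedGroup_iff.1 (hbal k)
  refine isBalancedAt_of_ne_zero (by rwa [(of_injective hφ i).isOfFinOrder_iff])
    fun n m hn _ hconj => ?_
  rw [← map_zpow, ← map_zpow] at hconj
  rcases isConj_or_isConj_base_of_isConj_of hφ hconj with h | ⟨c, hc⟩
  · exact hbalAt i u hu n m h
  rcases isConj_or_isConj_base_of_isConj_of hφ hconj.symm with h | ⟨c', hc'⟩
  · exact (hbalAt i u hu m n h).symm
  obtain ⟨Z, hZ, _⟩ := hvc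
  obtain ⟨z, N, hN, hpow⟩ := Subgroup.exists_pow_eq_zpow_of_isCyclic hZ
  choose t ht using hpow
  have hc_inf : ¬IsOfFinOrder c := fun hfin =>
    hu ((hc.symm.isOfFinOrder ((φ i).isOfFinOrder hfin)).of_zpow hn)
  have hz (k : ι) : IsBalancedAt (φ k z) := by
    refine hbalAt k _ fun hfin => hc_inf ?_
    rw [(hφ k).isOfFinOrder_iff] at hfin
    exact (ht c ▸ hfin.zpow).of_pow hN
  have htt' : |t c| = |t c'| := by
    refine abs_eq_of_isConj_base hφ hz ht ?_
    simpa only [← of_apply_eq_base φ i] using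
      (((of i).map_isConj hc).symm.trans hconj).trans ((of i).map_isConj hc')
  have ht0 : t c ≠ 0 := fun h0 => hc_inf <|
    isOfFinOrder_iff_pow_eq_one.2 ⟨N, Nat.pos_of_ne_zero hN, by rw [ht, h0, zpow_zero]⟩
  have hpow {c : H} {k : ℤ} (hk : IsConj (u ^ k) (φ i c)) :
      IsConj (u ^ (k * N)) (φ i z ^ t c) := by
    rw [zpow_mul, ← map_zpow, ← ht, map_pow, ← zpow_natCast]
    exact hk.zpow N
  have habs := (hz i).abs_mul_eq (hpow hc) (hpow hc')
  rw [abs_mul, abs_mul, abs_mul, abs_mul, ← htt'] at habs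
  have hN' : |(N : ℤ)| ≠ 0 := by simpa using hN
  exact (mul_right_cancel₀ hN' (mul_left_cancel₀ (abs_ne_zero.2 ht0) habs)).symm

theorem isBalancedGroup (hbal : ∀ i, IsBalancedGroup (G i))
    (hvc : ∃ Z : Subgroup H, IsCyclic Z ∧ Z.FiniteIndex) : IsBalancedGroup (PushoutI φ) := by
  refine isBalancedGroup_iff.2 fun g hg => ?_
  rcases exists_isConj_of_or_isCyclicallyReduced hφ g with ⟨i, u, h⟩ | ⟨l, hl, hne, h⟩
  · have hu : ¬IsOfFinOrder u := fun hu => hg (h.symm.isOfFinOrder ((of i).isOfFinOrder hu))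
    exact (isBalancedAt_of hφ hbal hvc hu).of_isConj h.symm
  · exact (isBalancedAt_listProd hφ hl hne).of_isConj h.symm

end

end Monoid.PushoutI

theorem balanced_amalgamated_product_over_virtually_cyclic
    {A B C : Type u} [Group A] [Group B] [Group C]
    (hC : ∃ Z : Subgroup C, IsCyclic Z ∧ Z.FiniteIndex)
    (f : C →* A) (g : C →* B)
    (hf : Function.Injective f) (hg : Function.Injective g)
    (hA : IsBalancedGroup A) (hB : IsBalancedGroup B) :
    IsBalancedGroup (AmalgamatedProduct f g) := by
  have hφ : ∀ b, Function.Injective (famHom f g b) := by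
    rintro (_ | _)
    exacts [hg, hf]
  have hbal : ∀ b, IsBalancedGroup (fam A B b) := by
    rintro (_ | _)
    exacts [hB, hA]
  exact Monoid.PushoutI.isBalancedGroup hφ hbal hC
end

section
/- Let H be a balanced group, A, B ≤ H subgroups with an isomorphism φ : A → B, and let G = H∗_φ be the corresponding HNN extension with stable letter t. If g ∈ H is an infinite order element such that no power of g is conjugate in H into A ∪ B, then g is balanced in G: for every k ∈ G and integers n, m, k gⁿ k⁻¹ = gᵐ implies |n| = |m|. -/
/-!
If `k` has a reduced word `h₀ t^u₁ a₁ ⋯ t^uᵣ aᵣ` with `r > 0`, then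
`h₀ t^u₁ a₁ ⋯ t^uᵣ (aᵣ gⁿ aᵣ⁻¹) t^(-uᵣ) aᵣ₋₁⁻¹ ⋯ t^(-u₁) h₀⁻¹` is a reduced word for `k gⁿ k⁻¹`:
the mirrored half has no pinch because the first half has none, and the middle letter is no pinch
because no conjugate of `gⁿ` lies in `A ∪ B`. By Britton's lemma `k gⁿ k⁻¹ ∉ H`, so
`k gⁿ k⁻¹ = gᵐ` forces `k ∈ H`, where balancedness of `H` applies.
-/

open HNNExtension HNNExtension.NormalWord

namespace HNNExtension

variable {G : Type*} [Group G] {A B : Subgroup G} {φ : A ≃* B}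

/-- The relation of `ReducedWord.chain`: consecutive letters `t ^ u * a`, `t ^ v * b` do not
create a pinch `t ^ u * a * t ^ (-u)` with `a ∈ toSubgroup A B u`. -/
abbrev NoPinch (A B : Subgroup G) (p q : ℤˣ × G) : Prop :=
  p.2 ∈ toSubgroup A B p.1 → p.1 = q.1

theorem NoPinch.inv_neg {u v : ℤˣ} {a b c : G} (h : NoPinch A B (u, a) (v, b)) :
    NoPinch A B (-v, a⁻¹) (-u, c) := by
  intro (ha : a⁻¹ ∈ toSubgroup A B (-v))
  change -v = -u
  rcases eq_or_ne v u with rfl | hvu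
  · rfl
  · rw [Int.units_ne_iff_eq_neg.1 hvu, neg_neg, inv_mem_iff] at ha
    exact absurd (h ha).symm hvu

namespace NormalWord.ReducedWord

theorem exists_prod_eq (x : HNNExtension G A B φ) : ∃ w : ReducedWord G A B, w.prod φ = x := by
  obtain ⟨d⟩ := NormalWord.TransversalPair.nonempty G A B
  exact ⟨(NormalWord.equiv φ d x).toReducedWord, (NormalWord.equiv φ d).symm_apply_apply x⟩

theorem prod_mk_cons (h a : G) (u : ℤˣ) (L : List (ℤˣ × G))
    (hL : ((u, a) :: L).IsChain (NoPinch A B)) :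
    (⟨h, (u, a) :: L, hL⟩ : ReducedWord G A B).prod φ =
      of h * t ^ (u : ℤ) * (⟨a, L, hL.tail⟩ : ReducedWord G A B).prod φ := by
  simp only [prod, List.map_cons, List.prod_cons, mul_assoc]

def conjOfMulTPow (w : ReducedWord G A B) (u : ℤˣ) (h : G)
    (hchain : ((u, w.head) :: w.toList).IsChain (NoPinch A B))
    (hlast : ∀ p ∈ ((u, w.head) :: w.toList).getLast?, NoPinch A B p (-u, h⁻¹)) :
    ReducedWord G A B where
  head := h
  toList := (u, w.head) :: w.toList ++ [(-u, h⁻¹)]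
  chain := List.isChain_append.2 ⟨hchain, List.isChain_singleton _, fun p hp q hq => by
    rw [List.head?_singleton, Option.mem_some_iff] at hq
    exact hq ▸ hlast p hp⟩

theorem prod_conjOfMulTPow (w : ReducedWord G A B) (u : ℤˣ) (h : G) hchain hlast :
    (w.conjOfMulTPow u h hchain hlast).prod φ =
      (of h * t ^ (u : ℤ)) * w.prod φ * (of h * t ^ (u : ℤ))⁻¹ := by
  simp only [conjOfMulTPow, prod, List.map_cons, List.map_append, List.map_nil, List.prod_cons,
    List.prod_append, List.prod_nil, Units.val_neg, zpow_neg, map_inv, mul_one]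
  group

theorem exists_conj_of_toList_ne_nil {c : G}
    (hc : ∀ (u : ℤˣ) (x : G), x * c * x⁻¹ ∉ toSubgroup A B u)
    (w : ReducedWord G A B) (hw : w.toList ≠ []) :
    ∃ W : ReducedWord G A B, W.prod φ = w.prod φ * of c * (w.prod φ)⁻¹ ∧ W.head = w.head ∧
      W.toList.head?.map Prod.fst = w.toList.head?.map Prod.fst ∧
      W.toList.getLast? = w.toList.head?.map fun p => (-p.1, w.head⁻¹) := by
  rcases w with ⟨h, L, hL⟩
  induction L generalizing h with
  | nil => exact absurd rfl hw
  | cons p L ih =>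
    obtain ⟨u, a⟩ := p
    rcases eq_or_ne L [] with rfl | hL₀
    · let core : ReducedWord G A B := ⟨a * c * a⁻¹, [], List.isChain_nil⟩
      refine ⟨core.conjOfMulTPow u h (List.isChain_singleton _) ?_, ?_, rfl, rfl, rfl⟩
      · rintro _ ⟨⟩
        exact fun hmem => absurd hmem (hc u a)
      · rw [prod_conjOfMulTPow, prod_mk_cons]
        simp only [prod, core, List.map_nil, List.prod_nil, mul_one, map_mul, map_inv]
        group
    · obtain ⟨W, hprod, hhead, hfst, hlast⟩ := ih a hL.tail hL₀
      obtain ⟨⟨v, b⟩, L, rfl⟩ := List.exists_cons_of_ne_nil hL₀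
      have hlink : NoPinch A B (u, a) (v, b) := (List.isChain_cons_cons.1 hL).1
      obtain ⟨⟨v', b'⟩, L', hW⟩ := List.exists_cons_of_ne_nil (l := W.toList) (by
        rintro hnil; simp [hnil] at hfst)
      rw [hW] at hfst hlast
      obtain rfl : v' = v := by simpa using hfst
      have hchain : ((u, W.head) :: W.toList).IsChain (NoPinch A B) := by
        rw [hW, List.isChain_cons_cons, hhead]
        exact ⟨hlink, hW ▸ W.chain⟩
      have hlast' : ∀ p ∈ ((u, W.head) :: W.toList).getLast?, NoPinch A B p (-u, h⁻¹) := by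
        rw [hW, List.getLast?_cons_cons, hlast]
        rintro _ ⟨⟩
        exact hlink.inv_neg
      refine ⟨W.conjOfMulTPow u h hchain hlast', ?_, rfl, rfl, ?_⟩
      · rw [prod_conjOfMulTPow, hprod, prod_mk_cons]
        group
      · exact List.getLast?_concat

end NormalWord.ReducedWord

theorem mem_range_of_mul_of_mul_inv_mem_range {c : G}
    (hc : ∀ (u : ℤˣ) (x : G), x * c * x⁻¹ ∉ toSubgroup A B u) {k : HNNExtension G A B φ}
    (hk : k * of c * k⁻¹ ∈ (of : G →* HNNExtension G A B φ).range) :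
    k ∈ (of : G →* HNNExtension G A B φ).range := by
  obtain ⟨w, rfl⟩ := ReducedWord.exists_prod_eq k
  by_cases hw : w.toList = []
  · exact ⟨w.head, by simp [ReducedWord.prod, hw]⟩
  · obtain ⟨W, hW, -, -, hlast⟩ := w.exists_conj_of_toList_ne_nil hc hw
    rw [HNNExtension.ReducedWord.toList_eq_nil_of_mem_of_range φ W (hW ▸ hk)] at hlast
    simp [hw] at hlast

end HNNExtension

theorem balanced_element_of_HNN_of_no_power_conjugate_into_assoc
    {H : Type*} [Group H] (hH : IsBalancedGroup H) (A B : Subgroup H) (φ : A ≃* B)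
    (g : H) (hg : ¬ IsOfFinOrder g)
    (hcon : ∀ n : ℤ, n ≠ 0 → ∀ h : H, h * g ^ n * h⁻¹ ∉ (A : Set H) ∪ (B : Set H)) :
    ∀ k : HNNExtension H A B φ, ∀ n m : ℤ,
      k * (HNNExtension.of g) ^ n * k⁻¹ = (HNNExtension.of g) ^ m → |n| = |m| := by
  intro k n m hk
  rcases eq_or_ne n 0 with rfl | hn
  · have hgm : g ^ m = 1 := of_injective φ (by simpa [eq_comm] using hk)
    obtain rfl : m = 0 := by
      by_contra hm
      exact hg (isOfFinOrder_iff_zpow_eq_one.2 ⟨m, hm, hgm⟩)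
    rfl
  · have hc : ∀ (u : ℤˣ) (x : H), x * g ^ n * x⁻¹ ∉ toSubgroup A B u := by
      intro u x hx
      rcases Int.units_eq_one_or u with rfl | rfl
      exacts [hcon n hn x (Or.inl hx), hcon n hn x (Or.inr hx)]
    obtain ⟨h, rfl⟩ := mem_range_of_mul_of_mul_inv_mem_range hc ⟨g ^ m, by simpa using hk.symm⟩
    exact hH g hg h n m (of_injective φ (by simpa using hk))
end
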